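/- Sublinear convergence of PDHG normalized iterates to the infimal displacement vector: let T be the PDHG operator for a standard-form LP with step size 0 < s < 1/‖A‖₂, with infimal displacement vector v, and let {z^k} be the iterates z^{k+1} = T(z^k). Then there exists a point z* with T(z*) = z* + v, and for every such z* and every k ≥ 1, ‖v − (1/k)(z^k − z⁰)‖_{P_s} ≤ (2/k)·‖z⁰ − z*‖_{P_s}. -/

import Mathlib

open Matrix Filter

/-- Euclidean norm of a vector in `ℝ^d`. -/
noncomputable def enorm {d : ℕ} (x : Fin d → ℝ) : ℝ := Real.sqrt (x ⬝ᵥ x)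

/-- Spectral norm (ℓ₂ operator norm) of a matrix. -/
noncomputable def specNorm {m n : ℕ} (A : Matrix (Fin m) (Fin n) ℝ) : ℝ :=
  sSup {t | ∃ x : Fin n → ℝ, x ⬝ᵥ x ≤ 1 ∧ t = _root_.enorm (A.mulVec x)}

/-- Componentwise positive part (projection onto the nonnegative orthant). -/
def projPos {d : ℕ} (x : Fin d → ℝ) : Fin d → ℝ := fun i => max (x i) 0

/-- One PDHG iteration with equal primal/dual step size `s`. -/
noncomputable def pdhgT {m n : ℕ} (A : Matrix (Fin m) (Fin n) ℝ) (b : Fin m → ℝ)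
    (c : Fin n → ℝ) (s : ℝ) (z : (Fin n → ℝ) × (Fin m → ℝ)) : (Fin n → ℝ) × (Fin m → ℝ) :=
  let x' := projPos (z.1 + s • Aᵀ.mulVec z.2 - s • c)
  (x', z.2 - s • A.mulVec ((2 : ℝ) • x' - z.1) + s • b)

/-- The Lagrangian `L(x,y) = cᵀx - yᵀAx + bᵀy`. -/
noncomputable def lagr {m n : ℕ} (A : Matrix (Fin m) (Fin n) ℝ) (b : Fin m → ℝ)
    (c : Fin n → ℝ) (x : Fin n → ℝ) (y : Fin m → ℝ) : ℝ :=
  c ⬝ᵥ x - y ⬝ᵥ A.mulVec x + b ⬝ᵥ y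

/-- Membership in `Z = ℝ₊ⁿ × ℝᵐ`. -/
def inZ {m n : ℕ} (z : (Fin n → ℝ) × (Fin m → ℝ)) : Prop := ∀ i, 0 ≤ z.1 i

/-- Saddle point of `L` over `Z`. -/
def isSaddle {m n : ℕ} (A : Matrix (Fin m) (Fin n) ℝ) (b : Fin m → ℝ) (c : Fin n → ℝ)
    (z : (Fin n → ℝ) × (Fin m → ℝ)) : Prop :=
  inZ z ∧ ∀ w : (Fin n → ℝ) × (Fin m → ℝ), inZ w →
    lagr A b c z.1 w.2 ≤ lagr A b c z.1 z.2 ∧ lagr A b c z.1 z.2 ≤ lagr A b c w.1 z.2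

/-- The quadratic form `‖z‖²_{P_s}` induced by `P_s = [[(1/s)I, Aᵀ],[A,(1/s)I]]`. -/
noncomputable def PsSq {m n : ℕ} (A : Matrix (Fin m) (Fin n) ℝ) (s : ℝ)
    (z : (Fin n → ℝ) × (Fin m → ℝ)) : ℝ :=
  (1 / s) * (z.1 ⬝ᵥ z.1 + z.2 ⬝ᵥ z.2) + 2 * (A.mulVec z.1 ⬝ᵥ z.2)

/-- The `P_s` norm. -/
noncomputable def PsNorm {m n : ℕ} (A : Matrix (Fin m) (Fin n) ℝ) (s : ℝ)
    (z : (Fin n → ℝ) × (Fin m → ℝ)) : ℝ := Real.sqrt (PsSq A s z)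

/-- Euclidean norm on the primal-dual pair space. -/
noncomputable def enormP {m n : ℕ} (z : (Fin n → ℝ) × (Fin m → ℝ)) : ℝ :=
  Real.sqrt (z.1 ⬝ᵥ z.1 + z.2 ⬝ᵥ z.2)

/-- Normalized duality gap `ρ_r(z)`. -/
noncomputable def rho {m n : ℕ} (A : Matrix (Fin m) (Fin n) ℝ) (b : Fin m → ℝ)
    (c : Fin n → ℝ) (r : ℝ) (z : (Fin n → ℝ) × (Fin m → ℝ)) : ℝ :=
  (1 / r) * sSup {g | ∃ w : (Fin n → ℝ) × (Fin m → ℝ), inZ w ∧ enormP (w - z) ≤ r ∧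
    g = lagr A b c z.1 w.2 - lagr A b c w.1 z.2}

/-- Euclidean distance to the saddle-point set `Z*`. -/
noncomputable def dist2 {m n : ℕ} (A : Matrix (Fin m) (Fin n) ℝ) (b : Fin m → ℝ)
    (c : Fin n → ℝ) (z : (Fin n → ℝ) × (Fin m → ℝ)) : ℝ :=
  sInf {d | ∃ w, isSaddle A b c w ∧ d = enormP (z - w)}

/-- `P_s`-distance to the saddle-point set `Z*`. -/
noncomputable def distPs {m n : ℕ} (A : Matrix (Fin m) (Fin n) ℝ) (b : Fin m → ℝ)
    (c : Fin n → ℝ) (s : ℝ) (z : (Fin n → ℝ) × (Fin m → ℝ)) : ℝ :=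
  sInf {d | ∃ w, isSaddle A b c w ∧ d = PsNorm A s (z - w)}

/-- `v` is the infimal displacement vector of `T`: the minimum-`P_s`-norm element
of the closure of `range (T - I)`. -/
def isIDV {m n : ℕ} (A : Matrix (Fin m) (Fin n) ℝ) (s : ℝ)
    (T : (Fin n → ℝ) × (Fin m → ℝ) → (Fin n → ℝ) × (Fin m → ℝ))
    (v : (Fin n → ℝ) × (Fin m → ℝ)) : Prop :=
  v ∈ closure {w | ∃ z, w = T z - z} ∧
  ∀ w ∈ closure {w | ∃ z, w = T z - z}, PsNorm A s v ≤ PsNorm A s w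

namespace PDHGaux

variable {m n : ℕ}

lemma dot_nonneg (x : Fin n → ℝ) : 0 ≤ x ⬝ᵥ x :=
  Finset.sum_nonneg fun i _ => mul_self_nonneg _

lemma dot_eq_zero {x : Fin n → ℝ} (h : x ⬝ᵥ x = 0) : x = 0 := by
  funext i
  have := (Finset.sum_eq_zero_iff_of_nonneg (fun i _ => mul_self_nonneg (x i))).1 h i
    (Finset.mem_univ i)
  have := mul_self_eq_zero.1 this
  simpa using this

lemma enorm_nonneg (x : Fin n → ℝ) : 0 ≤ _root_.enorm x := Real.sqrt_nonneg _

lemma enorm_sq (x : Fin n → ℝ) : (_root_.enorm x) ^ 2 = x ⬝ᵥ x := by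
  rw [_root_.enorm, Real.sq_sqrt (dot_nonneg x)]

lemma dot_cs (x y : Fin n → ℝ) : |x ⬝ᵥ y| ≤ _root_.enorm x * _root_.enorm y := by
  have h := Finset.sum_mul_sq_le_sq_mul_sq Finset.univ x y
  have h2 : (x ⬝ᵥ y) ^ 2 ≤ (_root_.enorm x * _root_.enorm y) ^ 2 := by
    rw [mul_pow, enorm_sq, enorm_sq]
    simpa [dotProduct, pow_two] using h
  have hnn : 0 ≤ _root_.enorm x * _root_.enorm y := mul_nonneg (enorm_nonneg x) (enorm_nonneg y)
  calc |x ⬝ᵥ y| = Real.sqrt ((x ⬝ᵥ y) ^ 2) := (Real.sqrt_sq_eq_abs _).symm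
  _ ≤ Real.sqrt ((_root_.enorm x * _root_.enorm y) ^ 2) := Real.sqrt_le_sqrt h2
  _ = _root_.enorm x * _root_.enorm y := Real.sqrt_sq hnn

lemma enorm_smul (t : ℝ) (x : Fin n → ℝ) : _root_.enorm (t • x) = |t| * _root_.enorm x := by
  unfold _root_.enorm
  rw [smul_dotProduct, dotProduct_smul, smul_eq_mul, smul_eq_mul, ← mul_assoc,
    Real.sqrt_mul (mul_self_nonneg t), Real.sqrt_mul_self_eq_abs t]

variable {A : Matrix (Fin m) (Fin n) ℝ}

lemma specSet_nonempty (A : Matrix (Fin m) (Fin n) ℝ) :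
    Set.Nonempty {t | ∃ x : Fin n → ℝ, x ⬝ᵥ x ≤ 1 ∧ t = _root_.enorm (A.mulVec x)} :=
  ⟨_root_.enorm (A.mulVec 0), 0, by simp [dotProduct], rfl⟩

lemma specSet_bdd (A : Matrix (Fin m) (Fin n) ℝ) :
    BddAbove {t | ∃ x : Fin n → ℝ, x ⬝ᵥ x ≤ 1 ∧ t = _root_.enorm (A.mulVec x)} := by
  refine ⟨Real.sqrt (∑ i, ∑ j, (A i j) ^ 2), ?_⟩
  rintro t ⟨x, hx, rfl⟩
  unfold _root_.enorm
  apply Real.sqrt_le_sqrt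
  have : ∀ i, (A.mulVec x i) * (A.mulVec x i) ≤ ∑ j, (A i j) ^ 2 := by
    intro i
    have h := Finset.sum_mul_sq_le_sq_mul_sq Finset.univ (A i) x
    have hx' : (∑ j, x j ^ 2) ≤ 1 := by simpa [dotProduct, pow_two] using hx
    have : (A.mulVec x i) ^ 2 ≤ (∑ j, (A i j) ^ 2) * ∑ j, x j ^ 2 := by
      simpa [Matrix.mulVec, dotProduct] using h
    have hAnn : 0 ≤ ∑ j, (A i j) ^ 2 := Finset.sum_nonneg fun _ _ => sq_nonneg _
    calc A.mulVec x i * A.mulVec x i = (A.mulVec x i) ^ 2 := (pow_two _).symm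
    _ ≤ (∑ j, (A i j) ^ 2) * ∑ j, x j ^ 2 := this
    _ ≤ (∑ j, (A i j) ^ 2) * 1 := by exact mul_le_mul_of_nonneg_left hx' hAnn
    _ = ∑ j, (A i j) ^ 2 := mul_one _
  calc A.mulVec x ⬝ᵥ A.mulVec x = ∑ i, A.mulVec x i * A.mulVec x i := rfl
  _ ≤ ∑ i, ∑ j, (A i j) ^ 2 := Finset.sum_le_sum fun i _ => this i

lemma specNorm_nonneg (A : Matrix (Fin m) (Fin n) ℝ) : 0 ≤ specNorm A := by
  have : (0:ℝ) ∈ {t | ∃ x : Fin n → ℝ, x ⬝ᵥ x ≤ 1 ∧ t = _root_.enorm (A.mulVec x)} :=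
    ⟨0, by simp [dotProduct], by simp [_root_.enorm, dotProduct]⟩
  exact le_csSup (specSet_bdd A) this

lemma enorm_mulVec_le (A : Matrix (Fin m) (Fin n) ℝ) (x : Fin n → ℝ) :
    _root_.enorm (A.mulVec x) ≤ specNorm A * _root_.enorm x := by
  rcases eq_or_ne (_root_.enorm x) 0 with h0 | h0
  · have hx : x ⬝ᵥ x = 0 := by
      have := enorm_sq x; rw [h0] at this; simpa using this.symm
    have : x = 0 := dot_eq_zero hx
    subst this
    simp [_root_.enorm, dotProduct, h0]
  · have hpos : 0 < _root_.enorm x := lt_of_le_of_ne (enorm_nonneg x) (Ne.symm h0)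
    have hmem : _root_.enorm (A.mulVec ((_root_.enorm x)⁻¹ • x)) ∈
        {t | ∃ x : Fin n → ℝ, x ⬝ᵥ x ≤ 1 ∧ t = _root_.enorm (A.mulVec x)} := by
      refine ⟨(_root_.enorm x)⁻¹ • x, ?_, rfl⟩
      rw [smul_dotProduct, dotProduct_smul, smul_eq_mul, smul_eq_mul, ← enorm_sq]
      rw [← mul_assoc]
      have : (_root_.enorm x)⁻¹ * ((_root_.enorm x)⁻¹ * _root_.enorm x ^ 2) = 1 := by
        rw [pow_two]; field_simp
      linarith [this]
    have hle := le_csSup (specSet_bdd A) hmem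
    rw [Matrix.mulVec_smul, enorm_smul, abs_of_nonneg (inv_nonneg.2 hpos.le)] at hle
    have heq : _root_.enorm (A.mulVec x) = ((_root_.enorm x)⁻¹ * _root_.enorm (A.mulVec x)) * _root_.enorm x := by
      field_simp
    rw [heq]
    exact mul_le_mul_of_nonneg_right hle hpos.le

lemma abs_dot_mulVec_le (A : Matrix (Fin m) (Fin n) ℝ) (x : Fin n → ℝ) (y : Fin m → ℝ) :
    |A.mulVec x ⬝ᵥ y| ≤ specNorm A * _root_.enorm x * _root_.enorm y := by
  calc |A.mulVec x ⬝ᵥ y| ≤ _root_.enorm (A.mulVec x) * _root_.enorm y := dot_cs _ _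
  _ ≤ specNorm A * _root_.enorm x * _root_.enorm y :=
      mul_le_mul_of_nonneg_right (enorm_mulVec_le A x) (enorm_nonneg y)

noncomputable def Pinner (A : Matrix (Fin m) (Fin n) ℝ) (s : ℝ)
    (z w : (Fin n → ℝ) × (Fin m → ℝ)) : ℝ :=
  (1 / s) * (z.1 ⬝ᵥ w.1 + z.2 ⬝ᵥ w.2) + (A.mulVec z.1 ⬝ᵥ w.2) + (A.mulVec w.1 ⬝ᵥ z.2)

variable (s : ℝ)

lemma Pinner_self (z : (Fin n → ℝ) × (Fin m → ℝ)) : Pinner A s z z = PsSq A s z := by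
  unfold Pinner PsSq; ring

lemma Pinner_comm (z w : (Fin n → ℝ) × (Fin m → ℝ)) : Pinner A s z w = Pinner A s w z := by
  unfold Pinner
  rw [dotProduct_comm z.1 w.1, dotProduct_comm z.2 w.2]; ring

lemma Pinner_add_left (a b c : (Fin n → ℝ) × (Fin m → ℝ)) :
    Pinner A s (a + b) c = Pinner A s a c + Pinner A s b c := by
  unfold Pinner
  simp [Matrix.mulVec_add, add_dotProduct, dotProduct_add]
  ring

lemma Pinner_smul_left (t : ℝ) (a c : (Fin n → ℝ) × (Fin m → ℝ)) :
    Pinner A s (t • a) c = t * Pinner A s a c := by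
  unfold Pinner
  simp [Matrix.mulVec_smul, smul_dotProduct, dotProduct_smul]
  ring

lemma Pinner_add_right (a b c : (Fin n → ℝ) × (Fin m → ℝ)) :
    Pinner A s a (b + c) = Pinner A s a b + Pinner A s a c := by
  rw [Pinner_comm, Pinner_add_left, Pinner_comm s a b, Pinner_comm s a c]

lemma Pinner_smul_right (t : ℝ) (a c : (Fin n → ℝ) × (Fin m → ℝ)) :
    Pinner A s a (t • c) = t * Pinner A s a c := by
  rw [Pinner_comm, Pinner_smul_left, Pinner_comm]

lemma Pinner_neg_left (a c : (Fin n → ℝ) × (Fin m → ℝ)) :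
    Pinner A s (-a) c = - Pinner A s a c := by
  have := Pinner_smul_left (A := A) s (-1) a c
  simpa using this

lemma Pinner_sub_left (a b c : (Fin n → ℝ) × (Fin m → ℝ)) :
    Pinner A s (a - b) c = Pinner A s a c - Pinner A s b c := by
  rw [sub_eq_add_neg, Pinner_add_left, Pinner_neg_left, sub_eq_add_neg]

lemma Pinner_sub_right (a b c : (Fin n → ℝ) × (Fin m → ℝ)) :
    Pinner A s a (b - c) = Pinner A s a b - Pinner A s a c := by
  rw [Pinner_comm, Pinner_sub_left, Pinner_comm s b a, Pinner_comm s c a]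

lemma Pinner_zero_left (c : (Fin n → ℝ) × (Fin m → ℝ)) : Pinner A s 0 c = 0 := by
  have := Pinner_smul_left (A := A) s 0 c c
  simpa using this

lemma PsSq_expand (z w : (Fin n → ℝ) × (Fin m → ℝ)) :
    PsSq A s (z + w) = PsSq A s z + 2 * Pinner A s z w + PsSq A s w := by
  rw [← Pinner_self, Pinner_add_left, Pinner_add_right, Pinner_add_right,
    Pinner_self, Pinner_self, Pinner_comm s w z]
  ring

lemma PsSq_sub_expand (z w : (Fin n → ℝ) × (Fin m → ℝ)) :
    PsSq A s (z - w) = PsSq A s z - 2 * Pinner A s z w + PsSq A s w := by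
  rw [← Pinner_self, Pinner_sub_left, Pinner_sub_right, Pinner_sub_right,
    Pinner_self, Pinner_self, Pinner_comm s w z]
  ring

lemma PsSq_smul (t : ℝ) (z : (Fin n → ℝ) × (Fin m → ℝ)) :
    PsSq A s (t • z) = t ^ 2 * PsSq A s z := by
  rw [← Pinner_self, Pinner_smul_left, Pinner_smul_right, Pinner_self]
  ring

noncomputable def eSq (z : (Fin n → ℝ) × (Fin m → ℝ)) : ℝ := z.1 ⬝ᵥ z.1 + z.2 ⬝ᵥ z.2

lemma eSq_nonneg (z : (Fin n → ℝ) × (Fin m → ℝ)) : 0 ≤ eSq z :=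
  add_nonneg (dot_nonneg _) (dot_nonneg _)

variable (hs : 0 < s) (hsA : s * specNorm A < 1)
include hs hsA

lemma PsSq_lower (z : (Fin n → ℝ) × (Fin m → ℝ)) :
    ((1 - s * specNorm A) / s) * eSq z ≤ PsSq A s z := by
  have habs := abs_dot_mulVec_le A z.1 z.2
  have h1 : _root_.enorm z.1 ^ 2 = z.1 ⬝ᵥ z.1 := enorm_sq z.1
  have h2 : _root_.enorm z.2 ^ 2 = z.2 ⬝ᵥ z.2 := enorm_sq z.2
  have hsq := sq_nonneg (_root_.enorm z.1 - _root_.enorm z.2)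
  have hN := specNorm_nonneg A
  have h3 : -(specNorm A) * ((z.1 ⬝ᵥ z.1) + (z.2 ⬝ᵥ z.2)) / 2 ≤ A.mulVec z.1 ⬝ᵥ z.2 := by
    nlinarith [neg_abs_le (A.mulVec z.1 ⬝ᵥ z.2)]
  unfold PsSq eSq
  have key : (1 - s * specNorm A) / s * (z.1 ⬝ᵥ z.1 + z.2 ⬝ᵥ z.2)
      = 1/s * (z.1 ⬝ᵥ z.1 + z.2 ⬝ᵥ z.2) - specNorm A * (z.1 ⬝ᵥ z.1 + z.2 ⬝ᵥ z.2) := by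
    field_simp
  rw [key]
  linarith

lemma PsSq_upper (z : (Fin n → ℝ) × (Fin m → ℝ)) :
    PsSq A s z ≤ ((1 + s * specNorm A) / s) * eSq z := by
  have habs := abs_dot_mulVec_le A z.1 z.2
  have h1 : _root_.enorm z.1 ^ 2 = z.1 ⬝ᵥ z.1 := enorm_sq z.1
  have h2 : _root_.enorm z.2 ^ 2 = z.2 ⬝ᵥ z.2 := enorm_sq z.2
  have hsq := sq_nonneg (_root_.enorm z.1 - _root_.enorm z.2)
  have hN := specNorm_nonneg A
  have h3 : A.mulVec z.1 ⬝ᵥ z.2 ≤ (specNorm A) * ((z.1 ⬝ᵥ z.1) + (z.2 ⬝ᵥ z.2)) / 2 := by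
    nlinarith [le_abs_self (A.mulVec z.1 ⬝ᵥ z.2)]
  unfold PsSq eSq
  have key : (1 + s * specNorm A) / s * (z.1 ⬝ᵥ z.1 + z.2 ⬝ᵥ z.2)
      = 1/s * (z.1 ⬝ᵥ z.1 + z.2 ⬝ᵥ z.2) + specNorm A * (z.1 ⬝ᵥ z.1 + z.2 ⬝ᵥ z.2) := by
    field_simp
  rw [key]
  linarith

lemma PsSq_nonneg (z : (Fin n → ℝ) × (Fin m → ℝ)) : 0 ≤ PsSq A s z := by
  have := PsSq_lower s hs hsA z
  have h0 : 0 < (1 - s * specNorm A) / s := by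
    apply div_pos; linarith; exact hs
  nlinarith [eSq_nonneg z]

lemma eSq_le_PsSq (z : (Fin n → ℝ) × (Fin m → ℝ)) :
    eSq z ≤ (s / (1 - s * specNorm A)) * PsSq A s z := by
  have := PsSq_lower s hs hsA z
  have h0 : 0 < (1 - s * specNorm A) := by linarith
  have key : s / (1 - s * specNorm A) * ((1 - s * specNorm A) / s * eSq z) = eSq z := by
    field_simp
  calc eSq z = s / (1 - s * specNorm A) * ((1 - s * specNorm A) / s * eSq z) := key.symm
  _ ≤ s / (1 - s * specNorm A) * PsSq A s z :=
      mul_le_mul_of_nonneg_left this (by positivity)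

lemma PsSq_eq_zero {z : (Fin n → ℝ) × (Fin m → ℝ)} (h : PsSq A s z = 0) : z = 0 := by
  have hl := eSq_le_PsSq s hs hsA z
  rw [h, mul_zero] at hl
  have h1 : z.1 ⬝ᵥ z.1 = 0 := by
    have := dot_nonneg z.1; have := dot_nonneg z.2; unfold eSq at hl; linarith
  have h2 : z.2 ⬝ᵥ z.2 = 0 := by
    have := dot_nonneg z.1; have := dot_nonneg z.2; unfold eSq at hl; linarith
  have := dot_eq_zero h1
  have := dot_eq_zero h2
  exact Prod.ext (by assumption) (by assumption)

lemma Pinner_cs (z w : (Fin n → ℝ) × (Fin m → ℝ)) :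
    (Pinner A s z w) ^ 2 ≤ PsSq A s z * PsSq A s w := by
  rcases eq_or_lt_of_le (PsSq_nonneg s hs hsA w) with h0 | h0
  · have hw : w = 0 := PsSq_eq_zero s hs hsA h0.symm
    subst hw
    rw [show Pinner A s z 0 = 0 by rw [Pinner_comm]; exact Pinner_zero_left s z]
    simp [← h0]
  · have h := PsSq_nonneg s hs hsA (PsSq A s w • z - Pinner A s z w • w)
    rw [PsSq_sub_expand, PsSq_smul, PsSq_smul, Pinner_smul_left, Pinner_smul_right] at h
    nlinarith [h0, sq_nonneg (Pinner A s z w)]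

lemma PsNorm_nonneg (z : (Fin n → ℝ) × (Fin m → ℝ)) : 0 ≤ PsNorm A s z := Real.sqrt_nonneg _

omit hs hsA in
lemma PsNorm_smul (t : ℝ) (z : (Fin n → ℝ) × (Fin m → ℝ)) :
    PsNorm A s (t • z) = |t| * PsNorm A s z := by
  unfold PsNorm
  rw [PsSq_smul, Real.sqrt_mul (sq_nonneg t), Real.sqrt_sq_eq_abs]

lemma PsNorm_sq (z : (Fin n → ℝ) × (Fin m → ℝ)) : (PsNorm A s z) ^ 2 = PsSq A s z :=
  Real.sq_sqrt (PsSq_nonneg s hs hsA z)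

lemma Pinner_le (z w : (Fin n → ℝ) × (Fin m → ℝ)) :
    Pinner A s z w ≤ PsNorm A s z * PsNorm A s w := by
  have hcs := Pinner_cs s hs hsA z w
  have h1 : (PsNorm A s z * PsNorm A s w) ^ 2 = PsSq A s z * PsSq A s w := by
    rw [mul_pow, PsNorm_sq s hs hsA, PsNorm_sq s hs hsA]
  have hnn : 0 ≤ PsNorm A s z * PsNorm A s w :=
    mul_nonneg (PsNorm_nonneg s hs hsA z) (PsNorm_nonneg s hs hsA w)
  nlinarith [le_abs_self (Pinner A s z w), abs_nonneg (Pinner A s z w),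
    sq_abs (Pinner A s z w)]

lemma PsNorm_triangle (z w : (Fin n → ℝ) × (Fin m → ℝ)) :
    PsNorm A s (z + w) ≤ PsNorm A s z + PsNorm A s w := by
  have h1 : PsSq A s (z + w) ≤ (PsNorm A s z + PsNorm A s w) ^ 2 := by
    rw [PsSq_expand]
    have := Pinner_le s hs hsA z w
    have := PsNorm_sq s hs hsA z
    have := PsNorm_sq s hs hsA w
    nlinarith
  have hnn : 0 ≤ PsNorm A s z + PsNorm A s w :=
    add_nonneg (PsNorm_nonneg s hs hsA z) (PsNorm_nonneg s hs hsA w)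
  calc PsNorm A s (z + w) = Real.sqrt (PsSq A s (z + w)) := rfl
  _ ≤ Real.sqrt ((PsNorm A s z + PsNorm A s w) ^ 2) := Real.sqrt_le_sqrt h1
  _ = PsNorm A s z + PsNorm A s w := Real.sqrt_sq hnn

lemma PsNorm_le_of_PsSq_le {a : ℝ} {z : (Fin n → ℝ) × (Fin m → ℝ)}
    (h : PsSq A s z ≤ a ^ 2) (ha : 0 ≤ a) : PsNorm A s z ≤ a := by
  calc PsNorm A s z = Real.sqrt (PsSq A s z) := rfl
  _ ≤ Real.sqrt (a ^ 2) := Real.sqrt_le_sqrt h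
  _ = a := Real.sqrt_sq ha

omit hs hsA in
lemma PsNorm_neg (z : (Fin n → ℝ) × (Fin m → ℝ)) : PsNorm A s (-z) = PsNorm A s z := by
  have := PsNorm_smul (A := A) s (-1) z
  simpa using this

omit hs hsA in
lemma transpose_dot (y : Fin m → ℝ) (x : Fin n → ℝ) :
    (Aᵀ.mulVec y) ⬝ᵥ x = y ⬝ᵥ (A.mulVec x) := by
  rw [dotProduct_comm, Matrix.dotProduct_mulVec, Matrix.vecMul_transpose, dotProduct_comm]

omit hs hsA in
lemma key_ident (hs0 : s ≠ 0) (dp dx : Fin n → ℝ) (dy : Fin m → ℝ) :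
    Pinner A s (dp, dy - s • A.mulVec ((2:ℝ) • dp - dx)) (dx, dy)
      - PsSq A s (dp, dy - s • A.mulVec ((2:ℝ) • dp - dx))
    = (1/s) * ((dx + s • Aᵀ.mulVec dy - dp) ⬝ᵥ dp) := by
  simp only [Pinner, PsSq, Matrix.mulVec_sub, Matrix.mulVec_add, Matrix.mulVec_smul,
    dotProduct_sub, sub_dotProduct, dotProduct_add, add_dotProduct, dotProduct_smul,
    smul_dotProduct, smul_eq_mul, transpose_dot]
  ring_nf
  rw [dotProduct_comm dy (A.mulVec dp), dotProduct_comm dy (A.mulVec dx),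
    dotProduct_comm (A.mulVec dx) (A.mulVec dp), dotProduct_comm dp dx]
  field_simp
  ring

omit hs hsA in
lemma proj_mono_dot (u1 u2 : Fin n → ℝ) :
    0 ≤ ((u1 - projPos u1) - (u2 - projPos u2)) ⬝ᵥ (projPos u1 - projPos u2) := by
  apply Finset.sum_nonneg
  intro i _
  simp only [Pi.sub_apply, projPos]
  rcases le_total (u1 i) (u2 i) with h | h
  · have h1 : max (u1 i) 0 ≤ max (u2 i) 0 := max_le_max h le_rfl
    have h2 : u1 i - max (u1 i) 0 ≤ u2 i - max (u2 i) 0 := by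
      rcases le_total (u1 i) 0 with h3 | h3 <;> rcases le_total (u2 i) 0 with h4 | h4 <;>
        simp [max_eq_left, max_eq_right, *] <;> nlinarith
    nlinarith
  · have h1 : max (u2 i) 0 ≤ max (u1 i) 0 := max_le_max h le_rfl
    have h2 : u2 i - max (u2 i) 0 ≤ u1 i - max (u1 i) 0 := by
      rcases le_total (u1 i) 0 with h3 | h3 <;> rcases le_total (u2 i) 0 with h4 | h4 <;>
        simp [max_eq_left, max_eq_right, *] <;> nlinarith
    nlinarith

variable (b : Fin m → ℝ) (c : Fin n → ℝ)

omit hsA in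
lemma pdhg_firm (z1 z2 : (Fin n → ℝ) × (Fin m → ℝ)) :
    PsSq A s (pdhgT A b c s z1 - pdhgT A b c s z2)
      ≤ Pinner A s (pdhgT A b c s z1 - pdhgT A b c s z2) (z1 - z2) := by
  set p1 := projPos (z1.1 + s • Aᵀ.mulVec z1.2 - s • c) with hp1
  set p2 := projPos (z2.1 + s • Aᵀ.mulVec z2.2 - s • c) with hp2
  have hdiff : pdhgT A b c s z1 - pdhgT A b c s z2
      = (p1 - p2, (z1.2 - z2.2) - s • A.mulVec ((2:ℝ) • (p1 - p2) - (z1.1 - z2.1))) := by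
    unfold pdhgT
    refine Prod.ext rfl ?_
    show (z1.2 - s • A.mulVec ((2:ℝ) • p1 - z1.1) + s • b)
        - (z2.2 - s • A.mulVec ((2:ℝ) • p2 - z2.1) + s • b)
      = (z1.2 - z2.2) - s • A.mulVec ((2:ℝ) • (p1 - p2) - (z1.1 - z2.1))
    simp only [Matrix.mulVec_sub, Matrix.mulVec_smul, smul_sub]
    abel
  rw [hdiff, ← sub_nonneg]
  have hz12 : z1 - z2 = (z1.1 - z2.1, z1.2 - z2.2) := rfl
  rw [hz12, key_ident s hs.ne']
  have hu : (z1.1 - z2.1) + s • Aᵀ.mulVec (z1.2 - z2.2) - (p1 - p2)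
      = ((z1.1 + s • Aᵀ.mulVec z1.2 - s • c) - p1)
        - ((z2.1 + s • Aᵀ.mulVec z2.2 - s • c) - p2) := by
    simp only [Matrix.mulVec_sub, smul_sub]
    abel
  rw [hu]
  have := proj_mono_dot (z1.1 + s • Aᵀ.mulVec z1.2 - s • c) (z2.1 + s • Aᵀ.mulVec z2.2 - s • c)
  rw [← hp1, ← hp2] at this
  have h1s : 0 ≤ 1/s := by positivity
  exact mul_nonneg h1s this

lemma pdhg_nonexp (z1 z2 : (Fin n → ℝ) × (Fin m → ℝ)) :
    PsNorm A s (pdhgT A b c s z1 - pdhgT A b c s z2) ≤ PsNorm A s (z1 - z2) := by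
  have hfirm := pdhg_firm (A := A) s hs b c z1 z2
  have hcs := Pinner_le s hs hsA (pdhgT A b c s z1 - pdhgT A b c s z2) (z1 - z2)
  have h1 := PsNorm_sq s hs hsA (pdhgT A b c s z1 - pdhgT A b c s z2)
  have h2 := PsNorm_nonneg s hs hsA (pdhgT A b c s z1 - pdhgT A b c s z2)
  have h3 := PsNorm_nonneg s hs hsA (z1 - z2)
  nlinarith

lemma pdhg_mono (z1 z2 : (Fin n → ℝ) × (Fin m → ℝ)) :
    Pinner A s (pdhgT A b c s z1 - pdhgT A b c s z2) (z1 - z2) ≤ PsSq A s (z1 - z2) := by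
  have hcs := Pinner_le s hs hsA (pdhgT A b c s z1 - pdhgT A b c s z2) (z1 - z2)
  have hne := pdhg_nonexp s hs hsA b c z1 z2
  have h1 := PsNorm_sq s hs hsA (z1 - z2)
  have h2 := PsNorm_nonneg s hs hsA (pdhgT A b c s z1 - pdhgT A b c s z2)
  have h3 := PsNorm_nonneg s hs hsA (z1 - z2)
  nlinarith

end PDHGaux


section Poly

variable {V : Type*} [AddCommGroup V] [Module ℝ V]

/-- A polyhedron: finite intersection of affine halfspaces. -/
def IsPolyhedral (Q : Set V) : Prop :=
  ∃ (ι : Type) (_ : Fintype ι) (f : ι → V →ₗ[ℝ] ℝ) (u : ι → ℝ),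
    Q = {x | ∀ i, f i x ≤ u i}

lemma isPoly_preimage {V' : Type*} [AddCommGroup V'] [Module ℝ V']
    (π : V' →ₗ[ℝ] V) {Q : Set V} (h : IsPolyhedral Q) : IsPolyhedral (π ⁻¹' Q) := by
  obtain ⟨ι, inst, f, u, rfl⟩ := h
  exact ⟨ι, inst, fun i => (f i).comp π, u, rfl⟩

lemma IsPolyhedral.isClosed {W : Type*} [NormedAddCommGroup W] [NormedSpace ℝ W]
    [FiniteDimensional ℝ W] {Q : Set W} (h : IsPolyhedral Q) : IsClosed Q := by
  obtain ⟨ι, inst, f, u, rfl⟩ := h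
  have : {x : W | ∀ i, f i x ≤ u i} = ⋂ i, {x | f i x ≤ u i} := by
    ext x; simp
  rw [this]
  exact isClosed_iInter fun i =>
    IsClosed.preimage (f i).continuous_of_finiteDimensional isClosed_Iic

/-- Fourier–Motzkin elimination step. -/
lemma isPoly_elim (e : V) {Q : Set V} (h : IsPolyhedral Q) :
    IsPolyhedral {w | ∃ t : ℝ, w + t • e ∈ Q} := by
  classical
  obtain ⟨ι, inst, f, u, rfl⟩ := h
  set c : ι → ℝ := fun i => f i e with hc
  refine ⟨ι ⊕ ι × ι, inferInstance,
    Sum.elim (fun i => if c i = 0 then f i else 0)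
      (fun p => if c p.1 < 0 ∧ 0 < c p.2 then c p.2 • f p.1 - c p.1 • f p.2 else 0),
    Sum.elim (fun i => if c i = 0 then u i else 0)
      (fun p => if c p.1 < 0 ∧ 0 < c p.2 then c p.2 * u p.1 - c p.1 * u p.2 else 0), ?_⟩
  ext w
  simp only [Set.mem_setOf_eq]
  constructor
  · rintro ⟨t, ht⟩ k
    have ht' : ∀ i, f i w + t * c i ≤ u i := by
      intro i
      have := ht i
      rwa [map_add, LinearMap.map_smul, smul_eq_mul] at this
    rcases k with i | ⟨i, j⟩
    · show (if c i = 0 then f i else 0) w ≤ (if c i = 0 then u i else 0)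
      by_cases h0 : c i = 0
      · rw [if_pos h0, if_pos h0]
        have := ht' i
        rw [h0] at this
        simpa using this
      · rw [if_neg h0, if_neg h0]
        simp
    · show (if c i < 0 ∧ 0 < c j then c j • f i - c i • f j else 0) w
        ≤ (if c i < 0 ∧ 0 < c j then c j * u i - c i * u j else 0)
      by_cases hij : c i < 0 ∧ 0 < c j
      · rw [if_pos hij, if_pos hij]
        simp only [LinearMap.sub_apply, LinearMap.smul_apply, smul_eq_mul]
        have h1 := ht' i
        have h2 := ht' j
        nlinarith [hij.1, hij.2]
      · rw [if_neg hij, if_neg hij]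
        simp
  · intro hw
    have h0 : ∀ i, c i = 0 → f i w ≤ u i := by
      intro i hi
      have ha : (if c i = 0 then f i else 0) w ≤ (if c i = 0 then u i else 0) := hw (Sum.inl i)
      rwa [if_pos hi, if_pos hi] at ha
    have hcross : ∀ i j, c i < 0 → 0 < c j →
        c j * f i w - c i * f j w ≤ c j * u i - c i * u j := by
      intro i j hi hj
      have ha : (if c i < 0 ∧ 0 < c j then c j • f i - c i • f j else 0) w
          ≤ (if c i < 0 ∧ 0 < c j then c j * u i - c i * u j else 0) := hw (Sum.inr (i, j))
      rw [if_pos ⟨hi, hj⟩, if_pos ⟨hi, hj⟩] at ha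
      simpa [LinearMap.sub_apply, LinearMap.smul_apply, smul_eq_mul] using ha
    -- lower bound (c i < 0) and upper bound (c j > 0) values
    set lb : ι → ℝ := fun i => (u i - f i w) / c i with hlb
    set ub : ι → ℝ := fun j => (u j - f j w) / c j with hub
    have hlbub : ∀ i j, c i < 0 → 0 < c j → lb i ≤ ub j := by
      intro i j hi hj
      have hkey := hcross i j hi hj
      have hne1 : c i ≠ 0 := ne_of_lt hi
      have hne2 : c j ≠ 0 := ne_of_gt hj
      rw [← sub_nonpos, hlb, hub, div_sub_div _ _ hne1 hne2]
      apply div_nonpos_of_nonneg_of_nonpos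
      · nlinarith
      · nlinarith
    set Hi : Finset ι := Finset.univ.filter (fun j => 0 < c j) with hHidef
    set Lo : Finset ι := Finset.univ.filter (fun i => c i < 0) with hLodef
    have key : ∀ t : ℝ, (∀ i, c i < 0 → lb i ≤ t) → (∀ j, 0 < c j → t ≤ ub j) →
        ∃ t' : ℝ, w + t' • e ∈ {x | ∀ i, f i x ≤ u i} := by
      intro t hlo hhi
      refine ⟨t, fun i => ?_⟩
      have heval : f i (w + t • e) = f i w + t * c i := by
        rw [map_add, LinearMap.map_smul, smul_eq_mul]
      rw [heval]
      rcases lt_trichotomy (c i) 0 with hneg | hzero | hpos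
      · have := hlo i hneg
        have : t * c i ≤ lb i * c i := by
          apply mul_le_mul_of_nonpos_right this (le_of_lt hneg)
        have heq : lb i * c i = u i - f i w := div_mul_cancel₀ _ (ne_of_lt hneg)
        linarith
      · rw [hzero]; simpa using h0 i hzero
      · have := hhi i hpos
        have : t * c i ≤ ub i * c i := mul_le_mul_of_nonneg_right this (le_of_lt hpos)
        have heq : ub i * c i = u i - f i w := div_mul_cancel₀ _ (ne_of_gt hpos)
        linarith
    by_cases hHi : Hi.Nonempty
    · refine key (Hi.inf' hHi ub) (fun i hi => ?_) (fun j hj => ?_)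
      · exact Finset.le_inf' hHi _ fun j hjHi =>
          hlbub i j hi (Finset.mem_filter.mp hjHi).2
      · exact Finset.inf'_le _ (Finset.mem_filter.mpr ⟨Finset.mem_univ j, hj⟩)
    · by_cases hLo : Lo.Nonempty
      · refine key (Lo.sup' hLo lb) (fun i hi => ?_) (fun j hj => ?_)
        · exact Finset.le_sup' _ (Finset.mem_filter.mpr ⟨Finset.mem_univ i, hi⟩)
        · exact absurd ⟨j, Finset.mem_filter.mpr ⟨Finset.mem_univ j, hj⟩⟩ hHi
      · refine key 0 (fun i hi => ?_) (fun j hj => ?_)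
        · exact absurd ⟨i, Finset.mem_filter.mpr ⟨Finset.mem_univ i, hi⟩⟩ hLo
        · exact absurd ⟨j, Finset.mem_filter.mpr ⟨Finset.mem_univ j, hj⟩⟩ hHi

/-- Iterated elimination along a list of directions. -/
def elimL (l : List V) (Q : Set V) : Set V :=
  l.foldr (fun e Q' => {w | ∃ t : ℝ, w + t • e ∈ Q'}) Q

lemma isPoly_elimL (l : List V) {Q : Set V} (h : IsPolyhedral Q) : IsPolyhedral (elimL l Q) := by
  induction l with
  | nil => exact h
  | cons e l ih => exact isPoly_elim e ih

lemma mem_elimL (l : List V) (Q : Set V) (w : V) :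
    w ∈ elimL l Q ↔ ∃ x ∈ Submodule.span ℝ {v : V | v ∈ l}, w + x ∈ Q := by
  induction l generalizing w with
  | nil =>
    simp only [elimL, List.foldr_nil]
    constructor
    · intro hw
      exact ⟨0, Submodule.zero_mem _, by simpa using hw⟩
    · rintro ⟨x, hx, hwx⟩
      have : x = 0 := by
        have : {v : V | v ∈ ([] : List V)} = (∅ : Set V) := by simp
        rw [this, Submodule.span_empty, Submodule.mem_bot] at hx
        exact hx
      rw [this, add_zero] at hwx
      exact hwx
  | cons e l ih =>
    simp only [elimL, List.foldr_cons, Set.mem_setOf_eq] at *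
    have hset : {v : V | v ∈ e :: l} = insert e {v : V | v ∈ l} := by
      ext v; simp [List.mem_cons]
    constructor
    · rintro ⟨t, ht⟩
      obtain ⟨x, hx, hwx⟩ := (ih _).mp ht
      refine ⟨t • e + x, ?_, by rwa [← add_assoc]⟩
      rw [hset, Submodule.mem_span_insert]
      exact ⟨t, x, hx, rfl⟩
    · rintro ⟨x, hx, hwx⟩
      rw [hset, Submodule.mem_span_insert] at hx
      obtain ⟨a, z, hz, rfl⟩ := hx
      exact ⟨a, (ih _).mpr ⟨z, hz, by rwa [← add_assoc] at hwx⟩⟩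

/-- Linear image of a polyhedron is a polyhedron (given finite bases of both spaces). -/
lemma isPoly_image {V' : Type*} [AddCommGroup V'] [Module ℝ V']
    {ιV ιV' : Type} [Fintype ιV] [Fintype ιV']
    (bV : Module.Basis ιV ℝ V) (bV' : Module.Basis ιV' ℝ V')
    (π : V →ₗ[ℝ] V') {Q : Set V} (h : IsPolyhedral Q) : IsPolyhedral (π '' Q) := by
  classical
  obtain ⟨ι, inst, f, u, hQ⟩ := h
  -- the "graph" polyhedron in V × V'
  set φ : ιV' → (V × V' →ₗ[ℝ] ℝ) := fun j =>
    (bV'.coord j).comp ((π.comp (LinearMap.fst ℝ V V')) - LinearMap.snd ℝ V V') with hφ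
  set R : Set (V × V') := {p | ∀ k : ι ⊕ (ιV' ⊕ ιV'),
    (Sum.elim (fun i => (f i).comp (LinearMap.fst ℝ V V'))
      (Sum.elim (fun j' => φ j') (fun j' => -φ j')) k) p
    ≤ (Sum.elim u (Sum.elim (fun _ => 0) (fun _ => 0)) k)} with hR
  have hRpoly : IsPolyhedral R := ⟨_, inferInstance, _, _, hR⟩
  have hRmem : ∀ p : V × V', p ∈ R ↔ (p.1 ∈ Q ∧ π p.1 = p.2) := by
    intro p
    constructor
    · intro hp
      have h1 : p.1 ∈ Q := by
        rw [hQ]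
        intro i
        exact hp (Sum.inl i)
      have h2 : ∀ j, bV'.repr (π p.1 - p.2) j = 0 := by
        intro j
        have ha := hp (Sum.inr (Sum.inl j))
        have hb := hp (Sum.inr (Sum.inr j))
        simp only [hφ, Sum.elim_inl, Sum.elim_inr, LinearMap.comp_apply, LinearMap.sub_apply,
          LinearMap.fst_apply, LinearMap.snd_apply, LinearMap.neg_apply,
          Module.Basis.coord_apply] at ha hb
        linarith
      have hrepr : bV'.repr (π p.1 - p.2) = 0 := by
        ext j
        simpa [map_sub] using h2 j
      have : π p.1 - p.2 = 0 := by
        have := bV'.repr.map_eq_zero_iff.mp hrepr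
        exact this
      exact ⟨h1, sub_eq_zero.mp this⟩
    · rintro ⟨h1, h2⟩ k
      rcases k with i | (j | j)
      · rw [hQ] at h1
        exact h1 i
      · simp [hφ, Sum.elim_inl, Sum.elim_inr, h2]
      · simp [hφ, Sum.elim_inl, Sum.elim_inr, h2]
  -- eliminate the V-coordinates
  set L : List (V × V') := (Finset.univ.toList (α := ιV)).map (fun j => ((bV j : V), (0 : V'))) with hL
  have hspan : {v : V × V' | v ∈ L} = (LinearMap.inl ℝ V V') '' (Set.range bV) := by
    ext p
    simp only [hL, List.mem_map, Set.mem_setOf_eq, Set.mem_image, Set.mem_range]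
    constructor
    · rintro ⟨j, _, rfl⟩
      exact ⟨bV j, ⟨j, rfl⟩, rfl⟩
    · rintro ⟨v, ⟨j, rfl⟩, rfl⟩
      exact ⟨j, Finset.mem_toList.mpr (Finset.mem_univ j), rfl⟩
  have hspan2 : Submodule.span ℝ {v : V × V' | v ∈ L} = LinearMap.range (LinearMap.inl ℝ V V') := by
    rw [hspan, Submodule.span_image, bV.span_eq, Submodule.map_top]
  have himg : π '' Q = (LinearMap.inr ℝ V V') ⁻¹' (elimL L R) := by
    ext y
    rw [Set.mem_preimage, mem_elimL]
    constructor
    · rintro ⟨x, hx, rfl⟩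
      refine ⟨(x, 0), ?_, ?_⟩
      · rw [hspan2]
        exact ⟨x, rfl⟩
      · rw [hRmem]
        constructor
        · simpa using hx
        · simp
    · rintro ⟨p, hp, hmem⟩
      rw [hspan2] at hp
      obtain ⟨x, rfl⟩ := hp
      rw [hRmem] at hmem
      refine ⟨x, ?_, ?_⟩
      · simpa using hmem.1
      · have := hmem.2
        simpa using this
  rw [himg]
  exact isPoly_preimage _ (isPoly_elimL L hRpoly)

end Poly

namespace PDHGaux

variable {m n : ℕ} (A : Matrix (Fin m) (Fin n) ℝ) (b : Fin m → ℝ) (c : Fin n → ℝ) (s : ℝ)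

/-- The linear part of `z ↦ z.1 + s Aᵀ z.2`. -/
noncomputable def uLin : ((Fin n → ℝ) × (Fin m → ℝ)) →ₗ[ℝ] (Fin n → ℝ) :=
  LinearMap.fst ℝ _ _ + s • (Aᵀ.mulVecLin.comp (LinearMap.snd ℝ _ _))

lemma uLin_apply (z : (Fin n → ℝ) × (Fin m → ℝ)) :
    uLin A s z = z.1 + s • Aᵀ.mulVec z.2 := by
  simp [uLin, Matrix.mulVecLin, Matrix.mulVec_transpose]

noncomputable def pLin (σ : Fin n → Bool) : ((Fin n → ℝ) × (Fin m → ℝ)) →ₗ[ℝ] (Fin n → ℝ) :=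
  LinearMap.pi (fun i => if σ i then (LinearMap.proj i).comp (uLin A s) else 0)

lemma pLin_apply (σ : Fin n → Bool) (z : (Fin n → ℝ) × (Fin m → ℝ)) (i : Fin n) :
    pLin A s σ z i = if σ i then uLin A s z i else 0 := by
  by_cases h : σ i <;> simp [pLin, LinearMap.pi_apply, h]

noncomputable def LS (σ : Fin n → Bool) :
    ((Fin n → ℝ) × (Fin m → ℝ)) →ₗ[ℝ] ((Fin n → ℝ) × (Fin m → ℝ)) :=
  (pLin A s σ - LinearMap.fst ℝ _ _).prod
    ((-s) • (A.mulVecLin.comp ((2:ℝ) • pLin A s σ - LinearMap.fst ℝ _ _)))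

lemma LS_apply (σ : Fin n → Bool) (z : (Fin n → ℝ) × (Fin m → ℝ)) :
    LS A s σ z = (pLin A s σ z - z.1,
      (-s) • A.mulVec ((2:ℝ) • pLin A s σ z - z.1)) := by
  simp [LS, LinearMap.prod_apply, Matrix.mulVecLin]

noncomputable def cshift (σ : Fin n → Bool) : Fin n → ℝ :=
  fun i => if σ i then -(s * c i) else 0

noncomputable def kS (σ : Fin n → Bool) : (Fin n → ℝ) × (Fin m → ℝ) :=
  (cshift c s σ, s • b - (2*s) • A.mulVec (cshift c s σ))

/-- The sign-pattern cell. -/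
def Pset (σ : Fin n → Bool) : Set ((Fin n → ℝ) × (Fin m → ℝ)) :=
  {z | ∀ i, if σ i then 0 ≤ (z.1 + s • Aᵀ.mulVec z.2 - s • c) i
      else (z.1 + s • Aᵀ.mulVec z.2 - s • c) i ≤ 0}

lemma uvec_apply (z : (Fin n → ℝ) × (Fin m → ℝ)) (i : Fin n) :
    (z.1 + s • Aᵀ.mulVec z.2 - s • c) i = uLin A s z i - s * c i := by
  rw [uLin_apply]
  simp

lemma Pset_poly (σ : Fin n → Bool) : IsPolyhedral (Pset A c s σ) := by
  classical
  refine ⟨Fin n, inferInstance,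
    fun i => if σ i then -((LinearMap.proj i).comp (uLin A s))
      else (LinearMap.proj i).comp (uLin A s),
    fun i => if σ i then -(s * c i) else s * c i, ?_⟩
  ext z
  simp only [Pset, Set.mem_setOf_eq]
  constructor
  · intro hz i
    have := hz i
    rw [uvec_apply] at this
    by_cases h : σ i
    · rw [if_pos h] at this
      rw [if_pos h, if_pos h]
      simp only [LinearMap.neg_apply, LinearMap.comp_apply, LinearMap.proj_apply]
      linarith
    · rw [if_neg h] at this
      rw [if_neg h, if_neg h]
      simp only [LinearMap.comp_apply, LinearMap.proj_apply]
      linarith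
  · intro hz i
    have := hz i
    rw [uvec_apply]
    by_cases h : σ i
    · rw [if_pos h, if_pos h] at this
      rw [if_pos h]
      simp only [LinearMap.neg_apply, LinearMap.comp_apply, LinearMap.proj_apply] at this
      linarith
    · rw [if_neg h, if_neg h] at this
      rw [if_neg h]
      simp only [LinearMap.comp_apply, LinearMap.proj_apply] at this
      linarith

lemma proj_eq_on_cell (σ : Fin n → Bool) (z : (Fin n → ℝ) × (Fin m → ℝ))
    (hz : z ∈ Pset A c s σ) :
    projPos (z.1 + s • Aᵀ.mulVec z.2 - s • c) = pLin A s σ z + cshift c s σ := by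
  funext i
  have hzi := hz i
  rw [uvec_apply] at hzi
  simp only [projPos, Pi.add_apply, pLin_apply, cshift, uvec_apply]
  by_cases h : σ i
  · rw [if_pos h] at hzi
    rw [max_eq_left hzi, if_pos h, if_pos h]
    ring
  · rw [if_neg h] at hzi
    rw [max_eq_right hzi, if_neg h, if_neg h]
    ring

lemma S_eq_on_cell (σ : Fin n → Bool) (z : (Fin n → ℝ) × (Fin m → ℝ))
    (hz : z ∈ Pset A c s σ) :
    pdhgT A b c s z - z = LS A s σ z + kS A b c s σ := by
  have hproj := proj_eq_on_cell A c s σ z hz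
  rw [LS_apply]
  unfold pdhgT kS
  refine Prod.ext ?_ ?_
  · show projPos (z.1 + s • Aᵀ.mulVec z.2 - s • c) - z.1
      = (pLin A s σ z - z.1) + cshift c s σ
    rw [hproj]
    abel
  · show (z.2 - s • A.mulVec ((2:ℝ) • projPos (z.1 + s • Aᵀ.mulVec z.2 - s • c) - z.1) + s • b) - z.2
      = (-s) • A.mulVec ((2:ℝ) • pLin A s σ z - z.1) + (s • b - (2*s) • A.mulVec (cshift c s σ))
    rw [hproj]
    have hexp : (2:ℝ) • (pLin A s σ z + cshift c s σ) - z.1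
        = ((2:ℝ) • pLin A s σ z - z.1) + (2:ℝ) • cshift c s σ := by
      rw [smul_add]
      abel
    rw [hexp, Matrix.mulVec_add, Matrix.mulVec_smul]
    have h2s : (2*s) • A.mulVec (cshift c s σ) = s • ((2:ℝ) • A.mulVec (cshift c s σ)) := by
      rw [smul_smul]
      ring_nf
    rw [h2s, smul_add, neg_smul]
    abel

lemma mem_cell_self (z : (Fin n → ℝ) × (Fin m → ℝ)) :
    z ∈ Pset A c s (fun i => decide (0 ≤ (z.1 + s • Aᵀ.mulVec z.2 - s • c) i)) := by
  intro i
  by_cases h : 0 ≤ (z.1 + s • Aᵀ.mulVec z.2 - s • c) i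
  · rw [if_pos (by simpa using h)]
    exact h
  · rw [if_neg (by simpa using h)]
    push_neg at h
    exact h.le

lemma range_S_eq :
    {w : (Fin n → ℝ) × (Fin m → ℝ) | ∃ z, w = pdhgT A b c s z - z}
      = ⋃ (σ : Fin n → Bool),
        (fun w => w + kS A b c s σ) '' ((LS A s σ) '' (Pset A c s σ)) := by
  ext w
  simp only [Set.mem_setOf_eq, Set.mem_iUnion, Set.mem_image]
  constructor
  · rintro ⟨z, rfl⟩
    set σ := fun i => decide (0 ≤ (z.1 + s • Aᵀ.mulVec z.2 - s • c) i) with hσ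
    have hz := mem_cell_self A c s z
    exact ⟨σ, LS A s σ z, ⟨z, hz, rfl⟩, (S_eq_on_cell A b c s σ z hz).symm⟩
  · rintro ⟨σ, w', ⟨z, hz, rfl⟩, rfl⟩
    exact ⟨z, (S_eq_on_cell A b c s σ z hz).symm ▸ rfl⟩

lemma range_S_closed :
    IsClosed {w : (Fin n → ℝ) × (Fin m → ℝ) | ∃ z, w = pdhgT A b c s z - z} := by
  rw [range_S_eq]
  apply isClosed_iUnion_of_finite
  intro σ
  have hbasis : Module.Basis (Fin n ⊕ Fin m) ℝ ((Fin n → ℝ) × (Fin m → ℝ)) :=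
    (Pi.basisFun ℝ (Fin n)).prod (Pi.basisFun ℝ (Fin m))
  have himg : IsPolyhedral ((LS A s σ) '' (Pset A c s σ)) :=
    isPoly_image hbasis hbasis (LS A s σ) (Pset_poly A c s σ)
  exact (Homeomorph.addRight (kS A b c s σ)).isClosedMap _ himg.isClosed


lemma projPos_cont {d : ℕ} : Continuous (projPos (d := d)) := by
  apply continuous_pi
  intro i
  exact ((continuous_apply i).comp continuous_id).max continuous_const

lemma pdhgT_cont : Continuous (pdhgT A b c s) := by
  have hAT : Continuous fun y : Fin m → ℝ => Aᵀ.mulVec y := by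
    have := (Aᵀ.mulVecLin).continuous_of_finiteDimensional
    exact continuous_const.matrix_mulVec continuous_id
  have hA : Continuous fun x : Fin n → ℝ => A.mulVec x := by
    have := (A.mulVecLin).continuous_of_finiteDimensional
    exact continuous_const.matrix_mulVec continuous_id
  have hu : Continuous fun z : (Fin n → ℝ) × (Fin m → ℝ) =>
      z.1 + s • Aᵀ.mulVec z.2 - s • c := by
    exact ((continuous_fst.add ((hAT.comp continuous_snd).const_smul s)).sub continuous_const)
  have hx' : Continuous fun z : (Fin n → ℝ) × (Fin m → ℝ) =>
      projPos (z.1 + s • Aᵀ.mulVec z.2 - s • c) := projPos_cont.comp hu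
  unfold pdhgT
  apply Continuous.prodMk
  · exact hx'
  · apply Continuous.add
    · apply Continuous.sub continuous_snd
      apply Continuous.fun_const_smul
      exact hA.comp ((hx'.const_smul (2:ℝ)).sub continuous_fst)
    · exact continuous_const

lemma abs_apply_le_enorm {d : ℕ} (v : Fin d → ℝ) (i : Fin d) : |v i| ≤ _root_.enorm v := by
  have h1 : (v i) ^ 2 ≤ v ⬝ᵥ v := by
    have : ∀ j, 0 ≤ v j * v j := fun j => mul_self_nonneg _
    calc (v i)^2 = v i * v i := sq _
    _ ≤ ∑ j, v j * v j := Finset.single_le_sum (fun j _ => this j) (Finset.mem_univ i)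
    _ = v ⬝ᵥ v := rfl
  calc |v i| = Real.sqrt ((v i)^2) := (Real.sqrt_sq_eq_abs _).symm
  _ ≤ Real.sqrt (v ⬝ᵥ v) := Real.sqrt_le_sqrt h1
  _ = _root_.enorm v := rfl

noncomputable def enormP {m n : ℕ} (z : (Fin n → ℝ) × (Fin m → ℝ)) : ℝ :=
  Real.sqrt (z.1 ⬝ᵥ z.1 + z.2 ⬝ᵥ z.2)

lemma dist_le_enormP (z w : (Fin n → ℝ) × (Fin m → ℝ)) : dist z w ≤ enormP (z - w) := by
  have hnn : 0 ≤ enormP (z - w) := Real.sqrt_nonneg _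
  rw [Prod.dist_eq]
  apply max_le
  · rw [dist_pi_le_iff hnn]
    intro i
    rw [Real.dist_eq]
    have h1 : |z.1 i - w.1 i| ≤ _root_.enorm (z.1 - w.1) := by
      have := abs_apply_le_enorm (z.1 - w.1) i
      simpa using this
    refine le_trans h1 ?_
    unfold _root_.enorm enormP
    apply Real.sqrt_le_sqrt
    have : (z - w).1 = z.1 - w.1 := rfl
    rw [this]
    have := dot_nonneg ((z - w).2)
    linarith [this]
  · rw [dist_pi_le_iff hnn]
    intro i
    rw [Real.dist_eq]
    have h1 : |z.2 i - w.2 i| ≤ _root_.enorm (z.2 - w.2) := by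
      have := abs_apply_le_enorm (z.2 - w.2) i
      simpa using this
    refine le_trans h1 ?_
    unfold _root_.enorm enormP
    apply Real.sqrt_le_sqrt
    have : (z - w).2 = z.2 - w.2 := rfl
    rw [this]
    have := dot_nonneg ((z - w).1)
    linarith [this]

lemma enormP_le_PsNorm (hs : 0 < s) (hsA : s * specNorm A < 1) (z : (Fin n → ℝ) × (Fin m → ℝ)) :
    enormP z ≤ Real.sqrt (s / (1 - s * specNorm A)) * PsNorm A s z := by
  have h := eSq_le_PsSq s hs hsA z
  have hfac : 0 ≤ s / (1 - s * specNorm A) := by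
    apply div_nonneg hs.le
    linarith
  calc enormP z = Real.sqrt (eSq z) := rfl
  _ ≤ Real.sqrt (s / (1 - s * specNorm A) * PsSq A s z) := Real.sqrt_le_sqrt h
  _ = Real.sqrt (s / (1 - s * specNorm A)) * PsNorm A s z := by
      rw [Real.sqrt_mul hfac]
      rfl

lemma dist_le_PsNorm (hs : 0 < s) (hsA : s * specNorm A < 1) (z w : (Fin n → ℝ) × (Fin m → ℝ)) :
    dist z w ≤ Real.sqrt (s / (1 - s * specNorm A)) * PsNorm A s (z - w) :=
  le_trans (dist_le_enormP z w) (enormP_le_PsNorm A s hs hsA (z - w))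

/-- Existence of the resolvent-type point: `T x - x = y + ε x`. -/
lemma exists_eps_sol (hs : 0 < s) (hsA : s * specNorm A < 1) {ε : ℝ} (hε : 0 < ε) (y : (Fin n → ℝ) × (Fin m → ℝ)) :
    ∃ x, pdhgT A b c s x - x = y + ε • x := by
  set G : ((Fin n → ℝ) × (Fin m → ℝ)) → ((Fin n → ℝ) × (Fin m → ℝ)) :=
    fun w => (1 / (1 + ε)) • (pdhgT A b c s w - y) with hG
  have hεpos : (0:ℝ) < 1 + ε := by linarith
  have hGlip : ∀ w w', PsNorm A s (G w - G w') ≤ (1/(1+ε)) * PsNorm A s (w - w') := by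
    intro w w'
    have hdiff : G w - G w' = (1/(1+ε)) • (pdhgT A b c s w - pdhgT A b c s w') := by
      rw [hG]
      dsimp only
      rw [← smul_sub]
      congr 1
      abel
    rw [hdiff, PsNorm_smul, abs_of_pos (by positivity)]
    exact mul_le_mul_of_nonneg_left (pdhg_nonexp s hs hsA b c w w') (by positivity)
  set seq : ℕ → ((Fin n → ℝ) × (Fin m → ℝ)) := fun k => G^[k] 0 with hseq
  have hseqsucc : ∀ k, seq (k + 1) = G (seq k) := by
    intro k
    rw [hseq]
    exact Function.iterate_succ_apply' G k 0
  set θ : ℝ := 1/(1+ε) with hθ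
  have hθ1 : θ < 1 := by
    rw [hθ, div_lt_one hεpos]
    linarith
  have hθ0 : 0 ≤ θ := by positivity
  have hgeo : ∀ k, PsNorm A s (seq (k+1) - seq k) ≤ θ^k * PsNorm A s (seq 1 - seq 0) := by
    intro k
    induction k with
    | zero => simp
    | succ k ih =>
      have := hGlip (seq (k+1)) (seq k)
      rw [← hseqsucc, ← hseqsucc] at this
      calc PsNorm A s (seq (k+2) - seq (k+1)) ≤ θ * PsNorm A s (seq (k+1) - seq k) := this
      _ ≤ θ * (θ^k * PsNorm A s (seq 1 - seq 0)) := mul_le_mul_of_nonneg_left ih hθ0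
      _ = θ^(k+1) * PsNorm A s (seq 1 - seq 0) := by ring
  set γ : ℝ := Real.sqrt (s / (1 - s * specNorm A)) with hγ
  have hγ0 : 0 ≤ γ := Real.sqrt_nonneg _
  have hcauchy : CauchySeq seq := by
    apply cauchySeq_of_le_geometric θ (γ * PsNorm A s (seq 1 - seq 0)) hθ1
    intro k
    rw [dist_comm]
    calc dist (seq (k+1)) (seq k) ≤ γ * PsNorm A s (seq (k+1) - seq k) :=
        dist_le_PsNorm A s hs hsA _ _
    _ ≤ γ * (θ^k * PsNorm A s (seq 1 - seq 0)) :=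
        mul_le_mul_of_nonneg_left (hgeo k) hγ0
    _ = γ * PsNorm A s (seq 1 - seq 0) * θ^k := by ring
  obtain ⟨x, hx⟩ := cauchySeq_tendsto_of_complete hcauchy
  have hGcont : Continuous G := by
    rw [hG]
    apply Continuous.fun_const_smul
    exact (pdhgT_cont A b c s).sub continuous_const
  have hfix : G x = x := by
    have h1 : Tendsto (fun k => G (seq k)) atTop (nhds (G x)) :=
      (hGcont.tendsto x).comp hx
    have h2 : Tendsto (fun k => seq (k+1)) atTop (nhds x) := hx.comp (tendsto_add_atTop_nat 1)
    have h3 : (fun k => seq (k+1)) = fun k => G (seq k) := funext hseqsucc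
    rw [h3] at h2
    exact tendsto_nhds_unique h1 h2
  refine ⟨x, ?_⟩
  have hx' : (1 + ε) • x = pdhgT A b c s x - y := by
    conv_lhs => rw [← hfix]
    show (1 + ε) • ((1 / (1 + ε)) • (pdhgT A b c s x - y)) = _
    rw [smul_smul, mul_one_div, div_self hεpos.ne', one_smul]
  have : pdhgT A b c s x - x = y + ε • x := by
    have hxx : pdhgT A b c s x = (1 + ε) • x + y := by
      rw [hx']
      abel
    rw [hxx]
    rw [show (1 + ε) • x = x + ε • x by rw [add_smul, one_smul]]
    abel
  exact this


lemma S_mono (hs : 0 < s) (hsA : s * specNorm A < 1) (z z' : (Fin n → ℝ) × (Fin m → ℝ)) :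
    Pinner A s ((pdhgT A b c s z - z) - (pdhgT A b c s z' - z')) (z - z') ≤ 0 := by
  have h1 : (pdhgT A b c s z - z) - (pdhgT A b c s z' - z')
      = (pdhgT A b c s z - pdhgT A b c s z') - (z - z') := by abel
  rw [h1, Pinner_sub_left, Pinner_self]
  have := pdhg_mono s hs hsA b c z z'
  linarith

lemma segment_mem_closure (hs : 0 < s) (hsA : s * specNorm A < 1)
    (z0 z1 : (Fin n → ℝ) × (Fin m → ℝ)) {t : ℝ} (ht0 : 0 ≤ t) (ht1 : t ≤ 1) :
    ((1 - t) • (pdhgT A b c s z0 - z0) + t • (pdhgT A b c s z1 - z1))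
      ∈ closure {w | ∃ z, w = pdhgT A b c s z - z} := by
  set T := pdhgT A b c s with hT
  set S0 := T z0 - z0 with hS0
  set S1 := T z1 - z1 with hS1
  set y := (1 - t) • S0 + t • S1 with hy
  set ε : ℕ → ℝ := fun j => 1 / ((j:ℝ) + 1) with hε
  have hεpos : ∀ j, 0 < ε j := by
    intro j
    rw [hε]
    positivity
  choose x hx using fun j : ℕ => exists_eps_sol A b c s hs hsA (hεpos j) y
  set zbar := (1 - t) • z0 + t • z1 with hzbar
  set K := (1 - t) * Pinner A s (y - S0) z0 + t * Pinner A s (y - S1) z1 with hK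
  have hzero : (1 - t) • (y - S0) + t • (y - S1) = 0 := by
    rw [hy]
    module
  have hKey : ∀ j, ε j * PsSq A s (x j)
      ≤ K + ε j * Pinner A s (x j) zbar := by
    intro j
    have h0 : Pinner A s ((y - S0) + ε j • x j) (x j - z0) ≤ 0 := by
      have := S_mono A b c s hs hsA (x j) z0
      rw [hx j, ← hS0] at this
      have harr : y + ε j • x j - S0 = (y - S0) + ε j • x j := by abel
      rwa [harr] at this
    have h1 : Pinner A s ((y - S1) + ε j • x j) (x j - z1) ≤ 0 := by
      have := S_mono A b c s hs hsA (x j) z1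
      rw [hx j, ← hS1] at this
      have harr : y + ε j • x j - S1 = (y - S1) + ε j • x j := by abel
      rwa [harr] at this
    rw [Pinner_add_left, Pinner_smul_left, Pinner_sub_right, Pinner_sub_right,
      Pinner_self] at h0 h1
    have hcancel : (1 - t) * Pinner A s (y - S0) (x j) + t * Pinner A s (y - S1) (x j) = 0 := by
      rw [← Pinner_smul_left, ← Pinner_smul_left, ← Pinner_add_left, hzero,
        Pinner_zero_left]
    have hbar : Pinner A s (x j) zbar
        = (1 - t) * Pinner A s (x j) z0 + t * Pinner A s (x j) z1 := by
      rw [hzbar, Pinner_add_right, Pinner_smul_right, Pinner_smul_right]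
    have e0 := mul_le_mul_of_nonneg_left h0 (by linarith : (0:ℝ) ≤ 1 - t)
    have e1 := mul_le_mul_of_nonneg_left h1 ht0
    rw [hK, hbar]
    nlinarith [e0, e1]
  -- quantitative bound on ε j * PsNorm (x j)
  set Z := PsNorm A s zbar with hZ
  set M := max K 0 with hM
  have hεN : ∀ j, ε j * PsNorm A s (x j)
      ≤ max (2 * ε j * Z) (Real.sqrt (2 * ε j * M)) := by
    intro j
    set N := PsNorm A s (x j) with hN
    have hN0 : 0 ≤ N := PsNorm_nonneg s hs hsA _
    have hZ0 : 0 ≤ Z := PsNorm_nonneg s hs hsA _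
    have hε0 := (hεpos j).le
    have hsq : PsSq A s (x j) = N ^ 2 := (PsNorm_sq s hs hsA _).symm
    have hcs : Pinner A s (x j) zbar ≤ N * Z := Pinner_le s hs hsA _ _
    have hkey := hKey j
    rw [hsq] at hkey
    have hKM : K ≤ M := le_max_left _ _
    have hM0 : 0 ≤ M := le_max_right _ _
    by_cases hNZ : N ≤ 2 * Z
    · refine le_trans ?_ (le_max_left _ _)
      nlinarith
    · push_neg at hNZ
      refine le_trans ?_ (le_max_right _ _)
      have h2 : ε j * N ^ 2 ≤ 2 * M := by
        have hp1 : ε j * Pinner A s (x j) zbar ≤ ε j * (N * Z) :=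
          mul_le_mul_of_nonneg_left hcs hε0
        have hp0 : 0 ≤ (ε j * N) * (N - 2 * Z) :=
          mul_nonneg (mul_nonneg hε0 hN0) (by linarith)
        nlinarith
      have h3 : (ε j * N) ^ 2 ≤ 2 * ε j * M := by nlinarith
      calc ε j * N = Real.sqrt ((ε j * N) ^ 2) := (Real.sqrt_sq (by positivity)).symm
      _ ≤ Real.sqrt (2 * ε j * M) := Real.sqrt_le_sqrt h3
  -- convergence
  set γ := Real.sqrt (s / (1 - s * specNorm A)) with hγ
  have hγ0 : 0 ≤ γ := Real.sqrt_nonneg _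
  have hdistbd : ∀ j, dist (T (x j) - x j) y
      ≤ γ * max (2 * ε j * Z) (Real.sqrt (2 * ε j * M)) := by
    intro j
    have h1 : dist (T (x j) - x j) y ≤ γ * PsNorm A s ((T (x j) - x j) - y) :=
      dist_le_PsNorm A s hs hsA _ _
    have h2 : (T (x j) - x j) - y = ε j • x j := by
      rw [hx j]
      abel
    rw [h2] at h1
    rw [PsNorm_smul, abs_of_pos (hεpos j)] at h1
    exact le_trans h1 (mul_le_mul_of_nonneg_left (hεN j) hγ0)
  have hε0 : Tendsto ε atTop (nhds 0) := tendsto_one_div_add_atTop_nhds_zero_nat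
  have hB : Tendsto (fun j => γ * max (2 * ε j * Z) (Real.sqrt (2 * ε j * M)))
      atTop (nhds 0) := by
    have t1 : Tendsto (fun j => 2 * ε j * Z) atTop (nhds 0) := by
      have := (hε0.const_mul 2).mul_const Z
      simpa [hε, one_div] using this
    have t2 : Tendsto (fun j => Real.sqrt (2 * ε j * M)) atTop (nhds 0) := by
      have t2' : Tendsto (fun j => 2 * ε j * M) atTop (nhds 0) := by
        have := (hε0.const_mul 2).mul_const M
        simpa [hε, one_div] using this
      have := (Real.continuous_sqrt.tendsto 0).comp t2'
      rw [Real.sqrt_zero] at this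
      exact this
    have := (t1.max t2).const_mul γ
    simpa using this
  have hdist0 : Tendsto (fun j => dist (T (x j) - x j) y) atTop (nhds 0) :=
    squeeze_zero (fun j => dist_nonneg) hdistbd hB
  have htend : Tendsto (fun j => T (x j) - x j) atTop (nhds y) :=
    tendsto_iff_dist_tendsto_zero.mpr hdist0
  exact mem_closure_of_tendsto htend (Filter.Eventually.of_forall (fun j => ⟨x j, rfl⟩))


lemma midpoint_mem_closure (hs : 0 < s) (hsA : s * specNorm A < 1)
    {u v' : (Fin n → ℝ) × (Fin m → ℝ)}
    (hu : ∃ z, u = pdhgT A b c s z - z)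
    (hv' : v' ∈ closure {w | ∃ z, w = pdhgT A b c s z - z}) :
    (1/2 : ℝ) • u + (1/2 : ℝ) • v' ∈ closure {w | ∃ z, w = pdhgT A b c s z - z} := by
  obtain ⟨z0, rfl⟩ := hu
  obtain ⟨w, hwmem, hwlim⟩ := mem_closure_iff_seq_limit.mp hv'
  choose z1 hz1 using hwmem
  have hmem : ∀ k, (1 - 1/2 : ℝ) • (pdhgT A b c s z0 - z0)
      + (1/2 : ℝ) • (pdhgT A b c s (z1 k) - z1 k)
      ∈ closure {w | ∃ z, w = pdhgT A b c s z - z} := by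
    intro k
    exact segment_mem_closure A b c s hs hsA z0 (z1 k) (by norm_num) (by norm_num)
  have hlim : Tendsto (fun k => (1 - 1/2 : ℝ) • (pdhgT A b c s z0 - z0)
      + (1/2 : ℝ) • (pdhgT A b c s (z1 k) - z1 k)) atTop
      (nhds ((1/2 : ℝ) • (pdhgT A b c s z0 - z0) + (1/2 : ℝ) • v')) := by
    have h1 : Tendsto (fun k => pdhgT A b c s (z1 k) - z1 k) atTop (nhds v') := by
      have : (fun k => pdhgT A b c s (z1 k) - z1 k) = w := by
        funext k
        exact (hz1 k).symm
      rwa [this]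
    have h2 : Tendsto (fun k => (1/2 : ℝ) • (pdhgT A b c s (z1 k) - z1 k)) atTop
        (nhds ((1/2 : ℝ) • v')) := h1.const_smul _
    have h3 := (tendsto_const_nhds
      (x := (1 - 1/2 : ℝ) • (pdhgT A b c s z0 - z0)) (f := atTop (α := ℕ))).add h2
    have heq : (1 - 1/2 : ℝ) = (1/2 : ℝ) := by norm_num
    rw [heq] at h3 ⊢
    exact h3
  exact isClosed_closure.mem_of_tendsto hlim (Filter.Eventually.of_forall hmem)

lemma pdhg_step (hs : 0 < s) (hsA : s * specNorm A < 1)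
    {v : (Fin n → ℝ) × (Fin m → ℝ)}
    (hvmem : v ∈ closure {w | ∃ z, w = pdhgT A b c s z - z})
    (hvmin : ∀ u ∈ closure {w | ∃ z, w = pdhgT A b c s z - z},
      PsNorm A s v ≤ PsNorm A s u)
    {w : (Fin n → ℝ) × (Fin m → ℝ)} (hw : pdhgT A b c s w = w + v) :
    pdhgT A b c s (w + v) = (w + v) + v := by
  set T := pdhgT A b c s with hT
  set u := T (w + v) - (w + v) with hu
  have humem : ∃ z, u = T z - z := ⟨w + v, rfl⟩
  have hu_le : PsNorm A s u ≤ PsNorm A s v := by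
    have h1 : u = T (w + v) - T w := by
      rw [hu, hw]
    have h2 := pdhg_nonexp s hs hsA b c (w + v) w
    rw [← hT] at h2
    rw [h1]
    have h3 : (w + v) - w = v := by abel
    rwa [h3] at h2
  have hv_le : PsNorm A s v ≤ PsNorm A s u := hvmin u (subset_closure humem)
  have heq : PsNorm A s u = PsNorm A s v := le_antisymm hu_le hv_le
  have heqsq : PsSq A s u = PsSq A s v := by
    rw [← PsNorm_sq s hs hsA, ← PsNorm_sq s hs hsA, heq]
  have hmid := midpoint_mem_closure A b c s hs hsA humem hvmem
  have hminmid : PsNorm A s v ≤ PsNorm A s ((1/2 : ℝ) • u + (1/2 : ℝ) • v) := hvmin _ hmid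
  have hsqmid : PsSq A s v ≤ PsSq A s ((1/2 : ℝ) • u + (1/2 : ℝ) • v) := by
    rw [← PsNorm_sq s hs hsA, ← PsNorm_sq s hs hsA]
    exact pow_le_pow_left₀ (PsNorm_nonneg s hs hsA v) hminmid 2
  have hmid_eq : (1/2 : ℝ) • u + (1/2 : ℝ) • v = (1/2 : ℝ) • (u + v) := by
    rw [smul_add]
  rw [hmid_eq, PsSq_smul, PsSq_expand] at hsqmid
  have hsub : PsSq A s (u - v) = 0 := by
    have h4 := PsSq_sub_expand (A := A) s u v
    have h5 := PsSq_nonneg s hs hsA (u - v)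
    nlinarith [heqsq, hsqmid]
  have : u - v = 0 := PsSq_eq_zero s hs hsA hsub
  have huv : u = v := by
    have := sub_eq_zero.mp this
    exact this
  rw [hu] at huv
  rw [sub_eq_iff_eq_add] at huv
  rw [huv]
  abel

lemma pdhg_iter_shift (hs : 0 < s) (hsA : s * specNorm A < 1)
    {v : (Fin n → ℝ) × (Fin m → ℝ)}
    (hvmem : v ∈ closure {w | ∃ z, w = pdhgT A b c s z - z})
    (hvmin : ∀ u ∈ closure {w | ∃ z, w = pdhgT A b c s z - z},
      PsNorm A s v ≤ PsNorm A s u)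
    {zst : (Fin n → ℝ) × (Fin m → ℝ)} (hzst : pdhgT A b c s zst = zst + v) :
    ∀ k : ℕ, pdhgT A b c s (zst + (k:ℝ) • v) = zst + (k:ℝ) • v + v := by
  intro k
  induction k with
  | zero => simpa using hzst
  | succ k ih =>
    have hstep := pdhg_step A b c s hs hsA hvmem hvmin ih
    have harith : zst + ((k:ℝ) + 1) • v = (zst + (k:ℝ) • v) + v := by
      rw [add_smul, one_smul]
      abel
    push_cast
    rw [harith]
    exact hstep

end PDHGaux


/-- **Sublinear convergence of PDHG normalized iterates to the infimal displacement
vector** (Theorem 7(b)): there exists `z*` with `T(z*) = z* + v`, and for every such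
`z*` and every `k ≥ 1`, `‖v − (1/k)(zᵏ − z⁰)‖_{P_s} ≤ (2/k)·‖z⁰ − z*‖_{P_s}`. -/
theorem pdhg_normalized_iterates {m n : ℕ} (A : Matrix (Fin m) (Fin n) ℝ)
    (b : Fin m → ℝ) (c : Fin n → ℝ) (s : ℝ) (hs : 0 < s) (hsA : s * specNorm A < 1)
    (v : (Fin n → ℝ) × (Fin m → ℝ)) (hv : isIDV A s (pdhgT A b c s) v)
    (z : ℕ → (Fin n → ℝ) × (Fin m → ℝ))
    (hz : ∀ k, z (k + 1) = pdhgT A b c s (z k)) :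
    (∃ zst : (Fin n → ℝ) × (Fin m → ℝ), pdhgT A b c s zst = zst + v) ∧
    ∀ zst : (Fin n → ℝ) × (Fin m → ℝ), pdhgT A b c s zst = zst + v →
      ∀ k : ℕ, 1 ≤ k →
        PsNorm A s (v - (1 / (k : ℝ)) • (z k - z 0))
          ≤ (2 / (k : ℝ)) * PsNorm A s (z 0 - zst) := by
  classical
  have hclosed := PDHGaux.range_S_closed A b c s
  have hvmem : v ∈ {w | ∃ z, w = pdhgT A b c s z - z} := by
    have h := hv.1
    rwa [hclosed.closure_eq] at h
  obtain ⟨z', hz'⟩ := hvmem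
  have hex : pdhgT A b c s z' = z' + v := by
    rw [hz']
    abel
  refine ⟨⟨z', hex⟩, ?_⟩
  intro zst hzst k hk
  have hiter := PDHGaux.pdhg_iter_shift A b c s hs hsA hv.1 hv.2 hzst
  have h1 : ∀ j : ℕ, PsNorm A s (z j - (zst + (j:ℝ) • v)) ≤ PsNorm A s (z 0 - zst) := by
    intro j
    induction j with
    | zero => simp
    | succ j ih =>
      have hTzst : pdhgT A b c s (zst + (j:ℝ) • v) = zst + ((j:ℝ) + 1) • v := by
        rw [hiter j, add_smul, one_smul]
        abel
      have hne := PDHGaux.pdhg_nonexp s hs hsA b c (z j) (zst + (j:ℝ) • v)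
      have hcast : ((j + 1 : ℕ) : ℝ) = (j : ℝ) + 1 := by push_cast; ring
      rw [hz j, hcast, ← hTzst]
      exact le_trans hne ih
  have hk0 : (0:ℝ) < (k:ℝ) := by
    have : (1:ℝ) ≤ (k:ℝ) := by exact_mod_cast hk
    linarith
  have hks : (k:ℝ) ≠ 0 := ne_of_gt hk0
  have hid : v - (1/(k:ℝ)) • (z k - z 0)
      = (1/(k:ℝ)) • ((zst + (k:ℝ) • v - z k) + (z 0 - zst)) := by
    have h5 : (zst + (k:ℝ) • v - z k) + (z 0 - zst) = (k:ℝ) • v - (z k - z 0) := by abel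
    conv_rhs => rw [h5, smul_sub, smul_smul]
    rw [one_div, inv_mul_cancel₀ hks, one_smul]
  rw [hid, PDHGaux.PsNorm_smul]
  have habs : |1/(k:ℝ)| = 1/(k:ℝ) := abs_of_pos (by positivity)
  rw [habs]
  have htri := PDHGaux.PsNorm_triangle s hs hsA (zst + (k:ℝ) • v - z k) (z 0 - zst)
  have hneg : PsNorm A s (zst + (k:ℝ) • v - z k) = PsNorm A s (z k - (zst + (k:ℝ) • v)) := by
    have h6 : zst + (k:ℝ) • v - z k = -(z k - (zst + (k:ℝ) • v)) := by abel
    rw [h6, PDHGaux.PsNorm_neg]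
  have hbd := h1 k
  rw [hneg] at htri
  have hfinal : PsNorm A s ((zst + (k:ℝ) • v - z k) + (z 0 - zst))
      ≤ 2 * PsNorm A s (z 0 - zst) := by linarith
  calc (1/(k:ℝ)) * PsNorm A s ((zst + (k:ℝ) • v - z k) + (z 0 - zst))
      ≤ (1/(k:ℝ)) * (2 * PsNorm A s (z 0 - zst)) := by
        apply mul_le_mul_of_nonneg_left hfinal
        positivity
  _ = (2/(k:ℝ)) * PsNorm A s (z 0 - zst) := by ring
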